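/- Interpolation Hölder bound: Let c : [0,∞) → L²(Ω) and suppose there are constants C₁, C₂, C₃ > 0 and η₀ > 0 such that for every η ∈ (0, η₀] there exists a family c^η(·,t) with (i) ‖c^η(·,t) − c(·,t)‖²_{L²} ≤ C₁ η for all t, (ii) ‖∇c^η(·,t)‖_{L²} ≤ C₂/η for all t, and (iii) |∫_Ω (c^η(x,t) − c^η(x,τ))(c(x,t) − c(x,τ)) dx| ≤ C₃ η^{-1} |t−τ|^{1/2} whenever |t−τ| ≤ 1. Then there is C > 0 with ‖c(·,t) − c(·,τ)‖²_{L²(Ω)} ≤ C |t−τ|^{1/4} for all |t−τ| ≤ min(1, η₀⁴); i.e. c is Hölder continuous with exponent 1/8 in L²(Ω). -/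

import Mathlib

/-!
Write `u = c t`, `v = c τ`, `p = cη η t`, `q = cη η τ` and split
`‖u - v‖² = ⟪u - p, u - v⟫ + ⟪p - q, u - v⟫ + ⟪q - v, u - v⟫`.
Cauchy–Schwarz bounds the outer terms by `√(C₁ η) ‖u - v‖`, and the middle one is at most
`C₃ η⁻¹ |t - τ|^{1/2}`; absorbing the linear term gives
`‖u - v‖² ≤ 4 C₁ η + 2 C₃ η⁻¹ |t - τ|^{1/2}`. The choice `η = |t - τ|^{1/4}`, admissible as soon
as `|t - τ| ≤ η₀⁴`, balances the two terms.
-/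

open RealInnerProductSpace

lemma sq_le_of_sq_le_two_mul_add {x s r : ℝ} (h : x ^ 2 ≤ 2 * s * x + r) :
    x ^ 2 ≤ 4 * s ^ 2 + 2 * r := by
  nlinarith [sq_nonneg (x - 2 * s)]

lemma norm_sub_sq_le_of_approx {H : Type*} [NormedAddCommGroup H] [InnerProductSpace ℝ H]
    {u v p q : H} {ε r : ℝ} (hp : ‖u - p‖ ^ 2 ≤ ε) (hq : ‖q - v‖ ^ 2 ≤ ε)
    (hpq : |⟪p - q, u - v⟫| ≤ r) :
    ‖u - v‖ ^ 2 ≤ 4 * ε + 2 * r := by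
  have hε : 0 ≤ ε := (sq_nonneg _).trans hp
  have split : ‖u - v‖ ^ 2 = ⟪u - p, u - v⟫ + ⟪p - q, u - v⟫ + ⟪q - v, u - v⟫ := by
    rw [← inner_add_left, ← inner_add_left, sub_add_sub_cancel, sub_add_sub_cancel,
      real_inner_self_eq_norm_sq]
  have outer {a b : H} (hab : ‖a - b‖ ^ 2 ≤ ε) : ⟪a - b, u - v⟫ ≤ √ε * ‖u - v‖ := by
    have hab' : ‖a - b‖ ≤ √ε := by simpa using Real.abs_le_sqrt hab
    exact (real_inner_le_norm _ _).trans
      (mul_le_mul_of_nonneg_right hab' (norm_nonneg _))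
  have key : ‖u - v‖ ^ 2 ≤ 2 * √ε * ‖u - v‖ + r := by
    linarith [outer hp, outer hq, (abs_le.1 hpq).2]
  simpa [Real.sq_sqrt hε] using sq_le_of_sq_le_two_mul_add key

theorem stmt_18_general {H : Type*} [NormedAddCommGroup H] [InnerProductSpace ℝ H]
    (c : ℝ → H) (cη : ℝ → ℝ → H)
    (C₁ C₃ η₀ : ℝ) (hC₁ : 0 < C₁) (hC₃ : 0 < C₃) (hη₀ : 0 < η₀)
    (h_approx : ∀ η ∈ Set.Ioc (0:ℝ) η₀, ∀ t ≥ (0:ℝ),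
      ‖cη η t - c t‖^2 ≤ C₁ * η)
    (h_pair : ∀ η ∈ Set.Ioc (0:ℝ) η₀, ∀ t ≥ (0:ℝ), ∀ τ ≥ (0:ℝ), |t - τ| ≤ 1 →
      |⟪cη η t - cη η τ, c t - c τ⟫| ≤ C₃ * η⁻¹ * |t - τ| ^ ((1:ℝ)/2)) :
    ∃ C > 0, ∀ t ≥ (0:ℝ), ∀ τ ≥ (0:ℝ), |t - τ| ≤ min 1 (η₀^4) →
      ‖c t - c τ‖^2 ≤ C * |t - τ| ^ ((1:ℝ)/4) := by
  refine ⟨4 * C₁ + 2 * C₃, by positivity, fun t ht τ hτ hd => ?_⟩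
  rcases eq_or_ne t τ with rfl | hne
  · simp
  set d := |t - τ|
  have hd0 : 0 < d := abs_pos.2 (sub_ne_zero.2 hne)
  set η := d ^ ((1:ℝ)/4)
  have hη0 : 0 < η := by positivity
  have hηη₀ : η ≤ η₀ := calc
    η ≤ (η₀ ^ 4) ^ ((1:ℝ)/4) :=
      Real.rpow_le_rpow hd0.le (hd.trans (min_le_right _ _)) (by norm_num)
    _ = η₀ := by rw [← Real.rpow_natCast, ← Real.rpow_mul hη₀.le]; norm_num
  have hmem : η ∈ Set.Ioc 0 η₀ := ⟨hη0, hηη₀⟩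
  have hsq : d ^ ((1:ℝ)/2) = η ^ 2 := by
    rw [← Real.rpow_natCast, ← Real.rpow_mul hd0.le]; norm_num
  calc ‖c t - c τ‖ ^ 2 ≤ 4 * (C₁ * η) + 2 * (C₃ * η⁻¹ * d ^ ((1:ℝ)/2)) :=
        norm_sub_sq_le_of_approx (by rw [norm_sub_rev]; exact h_approx η hmem t ht)
          (h_approx η hmem τ hτ) (h_pair η hmem t ht τ hτ (hd.trans (min_le_left _ _)))
    _ = (4 * C₁ + 2 * C₃) * η := by rw [hsq]; field_simp

theorem stmt_18 {H : Type*} [NormedAddCommGroup H] [InnerProductSpace ℝ H]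
    (c : ℝ → H) (cη : ℝ → ℝ → H) (D : ℝ → ℝ → H)
    (C₁ C₂ C₃ η₀ : ℝ) (hC₁ : 0 < C₁) (hC₂ : 0 < C₂) (hC₃ : 0 < C₃) (hη₀ : 0 < η₀)
    (h_approx : ∀ η ∈ Set.Ioc (0:ℝ) η₀, ∀ t ≥ (0:ℝ),
      ‖cη η t - c t‖^2 ≤ C₁ * η)
    (h_grad : ∀ η ∈ Set.Ioc (0:ℝ) η₀, ∀ t ≥ (0:ℝ),
      ‖D η t‖ ≤ C₂ / η)
    (h_bound : ∀ t ≥ (0:ℝ), ‖c t‖ ≤ C₂)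
    (h_pair : ∀ η ∈ Set.Ioc (0:ℝ) η₀, ∀ t ≥ (0:ℝ), ∀ τ ≥ (0:ℝ), |t - τ| ≤ 1 →
      |⟪cη η t - cη η τ, c t - c τ⟫| ≤ C₃ * η⁻¹ * |t - τ| ^ ((1:ℝ)/2)) :
    ∃ C > 0, ∀ t ≥ (0:ℝ), ∀ τ ≥ (0:ℝ), |t - τ| ≤ min 1 (η₀^4) →
      ‖c t - c τ‖^2 ≤ C * |t - τ| ^ ((1:ℝ)/4) :=
  stmt_18_general c cη C₁ C₃ η₀ hC₁ hC₃ hη₀ h_approx h_pair
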